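/- arXiv:1703.01474 — 6 statements merged into one kernel-verified Lean document; each statement's English description precedes it below -/
import Mathlib

section
/- Let Q be a complex polynomial with |Q(0)| ≥ 2ε and |Q(u)| ≤ 2 for all u on the unit circle |u| = 1, where 0 < ε ≤ 1. Then for 0 < ν < 1/2, the maximum of |Q| on the circle of radius ν centered at 1−ν satisfies max_{u ∈ ∂D_ν(1−ν)} |Q(u)| ≥ 2ε^{(1−ν)/ν}. -/
/-!
The Möbius map `z ↦ 1 - z⁻¹` sends the vertical line `Re z = 1/(2c)` onto the circle
`|u - (1 - c)| = c`, since `(1 - z⁻¹) - (1 - c) = c - z⁻¹`. Hence it carries the strip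
`1/2 ≤ Re z ≤ 1/(2ν)` into the closed unit disc, its two edges onto the unit circle and onto
`∂D_ν(1 - ν)`, and the point `z = 1` to `u = 0`. Hadamard's three-lines theorem on this strip
gives `|Q(0)| ≤ 2^(1-r) M^r` with `r = ν/(1-ν)` and `M` the maximum of `|Q|` on
`∂D_ν(1 - ν)`; solving for `M` gives the bound.
-/

open Complex Metric Set HadamardThreeLines

lemma norm_ofReal_sub_inv_sq (c : ℝ) {z : ℂ} (hz : z ≠ 0) :
    ‖(c : ℂ) - z⁻¹‖ ^ 2 = c ^ 2 + (1 - 2 * c * z.re) / ‖z‖ ^ 2 := by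
  have hz2 : normSq z ≠ 0 := normSq_eq_zero.not.mpr hz
  rw [Complex.sq_norm, Complex.sq_norm, normSq_sub, normSq_inv, normSq_ofReal]
  simp only [map_inv₀, normSq_conj, mul_re, ofReal_re, ofReal_im, inv_re, inv_im, conj_re,
    conj_im]
  field_simp
  ring

lemma norm_ofReal_sub_inv_le {c : ℝ} {z : ℂ} (hc : 0 ≤ c) (hz : 1 ≤ 2 * c * z.re) :
    ‖(c : ℂ) - z⁻¹‖ ≤ c := by
  have hz0 : z ≠ 0 := by rintro rfl; simp at hz; linarith
  refine (sq_le_sq₀ (norm_nonneg _) hc).mp ?_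
  rw [norm_ofReal_sub_inv_sq c hz0]
  have : (1 - 2 * c * z.re) / ‖z‖ ^ 2 ≤ 0 :=
    div_nonpos_of_nonpos_of_nonneg (by linarith) (by positivity)
  linarith

lemma norm_ofReal_sub_inv_lt {c : ℝ} {z : ℂ} (hc : 0 ≤ c) (hz : 1 < 2 * c * z.re) :
    ‖(c : ℂ) - z⁻¹‖ < c := by
  have hz0 : z ≠ 0 := by rintro rfl; simp at hz; linarith
  refine (sq_lt_sq₀ (norm_nonneg _) hc).mp ?_
  rw [norm_ofReal_sub_inv_sq c hz0]
  have : (1 - 2 * c * z.re) / ‖z‖ ^ 2 < 0 := div_neg_of_neg_of_pos (by linarith) (by positivity)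
  linarith

lemma norm_ofReal_sub_inv_eq {c : ℝ} {z : ℂ} (hc : 0 ≤ c) (hz : 2 * c * z.re = 1) :
    ‖(c : ℂ) - z⁻¹‖ = c := by
  have hz0 : z ≠ 0 := by rintro rfl; simp at hz
  refine (sq_eq_sq₀ (norm_nonneg _) hc).mp ?_
  rw [norm_ofReal_sub_inv_sq c hz0, hz, sub_self, zero_div, add_zero]

lemma mul_rpow_one_div_le_of_mul_le_interp {a ε M r : ℝ} (ha : 0 < a) (hε : 0 ≤ ε)
    (hM : 0 ≤ M) (hr : 0 < r) (h : a * ε ≤ a ^ (1 - r) * M ^ r) : a * ε ^ (1 / r) ≤ M := by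
  have har : 0 < a ^ r := Real.rpow_pos_of_pos ha r
  have hpow : (a * ε ^ (1 / r)) ^ r = a ^ r * ε := by
    rw [Real.mul_rpow ha.le (by positivity), ← Real.rpow_mul hε, one_div_mul_cancel hr.ne',
      Real.rpow_one]
  rw [← Real.rpow_le_rpow_iff (by positivity) hM hr, hpow]
  rw [Real.rpow_sub ha, Real.rpow_one, div_mul_eq_mul_div, le_div_iff₀ har] at h
  exact le_of_mul_le_mul_left (by linarith) ha

theorem norm_apply_zero_le_interp_of_tangent_circles {E : Type*} [NormedAddCommGroup E]
    [NormedSpace ℂ E] {g : ℂ → E} (hg : DiffContOnCl ℂ g (ball 0 1)) {ν a b : ℝ}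
    (hν0 : 0 < ν) (hν : ν ≤ 1 / 2) (ha : ∀ u : ℂ, ‖u‖ = 1 → ‖g u‖ ≤ a)
    (hb : ∀ u : ℂ, ‖u - (1 - ν)‖ = ν → ‖g u‖ ≤ b) :
    ‖g 0‖ ≤ a ^ (1 - ν / (1 - ν)) * b ^ (ν / (1 - ν)) := by
  have hlu : 1 / 2 < 1 / (2 * ν) := by
    rw [lt_div_iff₀ (by positivity)]
    linarith
  have hmobius :
      DiffContOnCl ℂ (fun z : ℂ ↦ 1 - z⁻¹) (verticalStrip (1 / 2) (1 / (2 * ν))) := by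
    refine (DiffContOnCl.inv (differentiable_id.diffContOnCl) ?_).const_sub 1
    rw [verticalStrip, closure_preimage_re, closure_Ioo hlu.ne]
    rintro z hz rfl
    norm_num at hz
  have hmaps :
      MapsTo (fun z : ℂ ↦ 1 - z⁻¹) (verticalStrip (1 / 2) (1 / (2 * ν))) (ball 0 1) := by
    intro z hz
    simpa using norm_ofReal_sub_inv_lt zero_le_one (by linarith [hz.1] : 1 < 2 * 1 * z.re)
  have hB : BddAbove ((norm ∘ g ∘ fun z : ℂ ↦ 1 - z⁻¹) ''
      verticalClosedStrip (1 / 2) (1 / (2 * ν))) := by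
    refine ((isCompact_closedBall (0 : ℂ) 1).bddAbove_image
      hg.continuousOn_ball.norm).mono ?_
    rintro _ ⟨z, hz, rfl⟩
    refine ⟨1 - z⁻¹, ?_, rfl⟩
    simpa using norm_ofReal_sub_inv_le zero_le_one (by linarith [hz.1] : 1 ≤ 2 * 1 * z.re)
  have hone : (1 : ℂ) ∈ verticalClosedStrip (1 / 2) (1 / (2 * ν)) := by
    refine ⟨by norm_num, ?_⟩
    rw [one_re, le_div_iff₀ (by positivity)]
    linarith
  have hinterp := norm_le_interp_of_mem_verticalClosedStrip' hlu hone (hg.comp hmobius hmaps) hB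
    (a := a) (b := b) ?_ ?_
  · have hr : ((1 : ℂ).re - 1 / 2) / (1 / (2 * ν) - 1 / 2) = ν / (1 - ν) := by
      have : 1 - ν ≠ 0 := by linarith
      rw [one_re]
      field_simp
      ring
    rw [hr] at hinterp
    simpa using hinterp
  · intro z hz
    refine ha _ ?_
    simpa using norm_ofReal_sub_inv_eq zero_le_one (by simp_all : 2 * 1 * z.re = 1)
  · intro z hz
    refine hb _ ?_
    have hre : 2 * ν * z.re = 1 := by
      rw [hz.out]; field_simp
    simpa [sub_sub_sub_cancel_left] using norm_ofReal_sub_inv_eq hν0.le hre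

theorem stmt5_general (Q : Polynomial ℂ) (ε ν : ℝ) (hε0 : 0 < ε)
    (hν0 : 0 < ν) (hν : ν < 1 / 2)
    (h0 : 2 * ε ≤ ‖Q.eval 0‖)
    (hcirc : ∀ u : ℂ, ‖u‖ = 1 → ‖Q.eval u‖ ≤ 2) :
    ∃ u : ℂ, ‖u - (1 - ν)‖ = ν ∧
      2 * ε ^ ((1 - ν) / ν) ≤ ‖Q.eval u‖ := by
  obtain ⟨u₀, hu₀, hmax⟩ := (isCompact_sphere (1 - ν : ℂ) ν).exists_isMaxOn
    (NormedSpace.sphere_nonempty.mpr hν0.le) Q.continuous.norm.continuousOn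
  have hbound := norm_apply_zero_le_interp_of_tangent_circles
    (Polynomial.differentiable Q).diffContOnCl hν0 hν.le hcirc
    (fun u hu ↦ hmax (mem_sphere_iff_norm.mpr hu))
  refine ⟨u₀, mem_sphere_iff_norm.mp hu₀, ?_⟩
  rw [← one_div_div]
  exact mul_rpow_one_div_le_of_mul_le_interp two_pos hε0.le (norm_nonneg _)
    (div_pos hν0 (by linarith)) (h0.trans hbound)

/-- If `|Q(0)| ≥ 2ε` and `|Q| ≤ 2` on the unit circle, then for `0 < ν < 1/2` the maximum of
`|Q|` on the circle of radius `ν` centered at `1−ν` is at least `2 ε^{(1−ν)/ν}`. -/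
theorem stmt5 (Q : Polynomial ℂ) (ε ν : ℝ) (hε0 : 0 < ε) (hε1 : ε ≤ 1)
    (hν0 : 0 < ν) (hν : ν < 1 / 2)
    (h0 : 2 * ε ≤ ‖Q.eval 0‖)
    (hcirc : ∀ u : ℂ, ‖u‖ = 1 → ‖Q.eval u‖ ≤ 2) :
    ∃ u : ℂ, ‖u - (1 - ν)‖ = ν ∧
      2 * ε ^ ((1 - ν) / ν) ≤ ‖Q.eval u‖ :=
  stmt5_general Q ε ν hε0 hν0 hν h0 hcirc
end

section
/- Let c ∈ ℝ^{n+1} with ∑_{i=0}^n |c_i| ≤ 2 and let Q_c(v) = ∑_{i=0}^n c_i v^i. Then for 0 < a ≤ 1/8, sup over the circle |z−(1−4a)| = 4a of |Q_c(z)| is at most √(sup_{z ∈ B_{a,1}} |Q_c(z)|) · 2√(exp(9an)), where B_{a,1} is the segment [1−16a, 1]. -/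
/-!
With `w = exp ξ`, the parametrisation `(1 - 8a) + 4a (w + 1/w)` of `B_{a,r}` becomes
`ellipseParam a ξ = 1 - 8a + 8a cosh ξ` on the line `re ξ = log r`. This entire map sends the
imaginary axis into the segment `[1 - 16a, 1]` and the strip `0 ≤ re ξ ≤ log 4` into the disc of
radius `1 + 9a`, where `|Q_c| ≤ 2 (1 + 9a)^n ≤ 2 exp (9an)`. Every point of the circle
`|z - (1 - 4a)| = 4a` is the image of some `ξ` in the left half `0 ≤ re ξ ≤ log 2` of the strip,
so Hadamard's three-lines theorem for `Q_c ∘ ellipseParam a` bounds `|Q_c(z)|` by `M^(1-t) K^t`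
with `t ≤ 1/2`, hence by `√M √K`.
-/

open Finset

lemma norm_sum_mul_pow_le {n : ℕ} {c : Fin (n + 1) → ℝ} {C R : ℝ} (hc : ∑ i, |c i| ≤ C)
    (hR : 1 ≤ R) {w : ℂ} (hw : ‖w‖ ≤ R) :
    ‖∑ i, (c i : ℂ) * w ^ (i : ℕ)‖ ≤ C * R ^ n :=
  calc ‖∑ i, (c i : ℂ) * w ^ (i : ℕ)‖
      ≤ ∑ i, |c i| * R ^ n := by
        refine (norm_sum_le _ _).trans (sum_le_sum fun i _ => ?_)
        rw [norm_mul, norm_pow, Complex.norm_real, Real.norm_eq_abs]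
        gcongr
        exact (pow_le_pow_left₀ (norm_nonneg w) hw _).trans (pow_le_pow_right₀ hR (Fin.is_le i))
    _ = (∑ i, |c i|) * R ^ n := (sum_mul ..).symm
    _ ≤ C * R ^ n := by gcongr

lemma Real.rpow_one_sub_mul_rpow_le_sqrt_mul_sqrt {M K t : ℝ} (hM : 0 ≤ M) (hMK : M ≤ K)
    (ht : t ≤ 1 / 2) : M ^ (1 - t) * K ^ t ≤ √M * √K :=
  calc M ^ (1 - t) * K ^ t = M ^ (1 / 2 : ℝ) * (M ^ (1 / 2 - t) * K ^ t) := by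
        rw [← mul_assoc, ← rpow_add' hM (by linarith)]
        ring_nf
    _ ≤ M ^ (1 / 2 : ℝ) * (K ^ (1 / 2 - t) * K ^ t) := by
        have : M ^ (1 / 2 - t) ≤ K ^ (1 / 2 - t) := rpow_le_rpow hM hMK (by linarith)
        have := rpow_nonneg (hM.trans hMK) t
        gcongr
    _ = √M * √K := by
        rw [← rpow_add' (hM.trans hMK) (by norm_num), sqrt_eq_rpow, sqrt_eq_rpow]
        ring_nf

open Complex HadamardThreeLines in
lemma norm_le_sqrt_mul_sqrt_of_re_le_midpoint {E : Type*} [NormedAddCommGroup E]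
    [NormedSpace ℂ E] {f : ℂ → E} (hf : Differentiable ℂ f) {l u M K : ℝ} (hlu : l < u)
    (hM : ∀ ξ ∈ re ⁻¹' {l}, ‖f ξ‖ ≤ M) (hK : ∀ ξ ∈ verticalClosedStrip l u, ‖f ξ‖ ≤ K)
    (hMK : M ≤ K) {ξ : ℂ} (hl : l ≤ ξ.re) (hmid : ξ.re ≤ (l + u) / 2) :
    ‖f ξ‖ ≤ √M * √K := by
  have hu : ∀ ξ ∈ re ⁻¹' {u}, ‖f ξ‖ ≤ K := fun ξ hξ =>
    hK ξ ⟨(hlu.le.trans_eq hξ.symm), hξ.le⟩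
  have hbdd : BddAbove ((norm ∘ f) '' verticalClosedStrip l u) := by
    refine ⟨K, ?_⟩
    rintro _ ⟨ζ, hζ, rfl⟩
    exact hK ζ hζ
  refine (norm_le_interp_of_mem_verticalClosedStrip' hlu ⟨hl, by linarith⟩ hf.diffContOnCl
    hbdd hM hu).trans (Real.rpow_one_sub_mul_rpow_le_sqrt_mul_sqrt ?_ hMK ?_)
  · exact (norm_nonneg _).trans (hM l (by simp))
  · rw [div_le_iff₀ (by linarith)]
    linarith

lemma exists_add_inv_eq_of_one_le_norm (s : ℂ) : ∃ z : ℂ, z + z⁻¹ = s ∧ 1 ≤ ‖z‖ := by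
  obtain ⟨d, hd⟩ := IsAlgClosed.exists_eq_mul_self (discrim 1 (-s) 1)
  obtain ⟨w, hw⟩ := exists_quadratic_eq_zero one_ne_zero ⟨d, hd⟩
  have hw0 : w ≠ 0 := by rintro rfl; simp at hw
  have hsum : w + w⁻¹ = s := by field_simp; linear_combination hw
  rcases le_total 1 ‖w‖ with h | h
  · exact ⟨w, hsum, h⟩
  · refine ⟨w⁻¹, by rwa [inv_inv, add_comm], ?_⟩
    rw [norm_inv]
    exact (one_le_inv₀ (norm_pos_iff.2 hw0)).2 h

lemma norm_sq_le_three_of_norm_add_inv_sub_one_eq_one {z : ℂ} (hz : 1 ≤ ‖z‖)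
    (hs : ‖z + z⁻¹ - 1‖ = 1) : ‖z‖ ^ 2 ≤ 3 := by
  have hz0 : z ≠ 0 := norm_pos_iff.1 (zero_lt_one.trans_le hz)
  have hq : ‖z ^ 2 - z + 1‖ ^ 2 = ‖z‖ ^ 2 := by
    rw [show z ^ 2 - z + 1 = (z + z⁻¹ - 1) * z by field_simp; ring, norm_mul, hs, one_mul]
  have hz2 : 1 ≤ ‖z‖ ^ 2 := one_le_pow₀ hz
  simp only [Complex.sq_norm] at hq hz2 ⊢
  simp only [Complex.normSq_apply, pow_two, Complex.add_re, Complex.sub_re, Complex.mul_re,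
    Complex.add_im, Complex.sub_im, Complex.mul_im, Complex.one_re, Complex.one_im] at hq hz2 ⊢
  set R := z.re * z.re + z.im * z.im
  have hkey : (R - 1) ^ 2 + 4 * z.re ^ 2 = 2 * (R + 1) * z.re := by linear_combination hq
  -- a quadratic equation in `z.re`: its discriminant `(R + 1)^2 - 4 (R - 1)^2` is nonnegative
  nlinarith [sq_nonneg (4 * z.re - (R + 1))]

open Complex in
lemma exists_two_mul_cosh_eq_of_norm_sub_one_eq_one {s : ℂ} (hs : ‖s - 1‖ = 1) :
    ∃ u : ℂ, 2 * cosh u = s ∧ 0 ≤ u.re ∧ u.re ≤ Real.log 4 / 2 := by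
  obtain ⟨z, rfl, hz⟩ := exists_add_inv_eq_of_one_le_norm s
  have hz0 : z ≠ 0 := norm_pos_iff.1 (zero_lt_one.trans_le hz)
  refine ⟨log z, by rw [two_cosh, exp_neg, exp_log hz0], ?_, ?_⟩
  · rw [log_re]
    exact Real.log_nonneg hz
  · rw [log_re, le_div_iff₀ two_pos, mul_comm, ← Real.log_rpow (by positivity)]
    have := norm_sq_le_three_of_norm_add_inv_sub_one_eq_one hz hs
    gcongr
    norm_cast
    linarith

lemma Complex.norm_cosh_le (z : ℂ) : ‖cosh z‖ ≤ Real.cosh z.re := by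
  rw [Complex.cosh, Real.cosh_eq, norm_div, Complex.norm_ofNat]
  gcongr
  refine (norm_add_le _ _).trans_eq ?_
  rw [Complex.norm_exp, Complex.norm_exp, Complex.neg_re]

noncomputable def ellipseParam (a : ℝ) (ξ : ℂ) : ℂ := 1 - 8 * a + 8 * a * Complex.cosh ξ

lemma exists_ellipseParam_eq {a : ℝ} (ha : 0 < a) {z : ℂ} (hz : ‖z - (1 - 4 * a)‖ = 4 * a) :
    ∃ u, ellipseParam a u = z ∧ 0 ≤ u.re ∧ u.re ≤ Real.log 4 / 2 := by
  have ha0 : (a : ℂ) ≠ 0 := by exact_mod_cast ha.ne'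
  obtain ⟨u, hu, hre⟩ := exists_two_mul_cosh_eq_of_norm_sub_one_eq_one
    (s := (z - (1 - 8 * a)) / (4 * a)) (by
      rw [show (z - (1 - 8 * a)) / (4 * a) - 1 = (z - (1 - 4 * a)) / (4 * a) by
        field_simp; ring, norm_div, hz, norm_mul, Complex.norm_real, Complex.norm_ofNat,
        Real.norm_of_nonneg ha.le]
      field_simp)
  refine ⟨u, ?_, hre⟩
  rw [ellipseParam, show 8 * (a : ℂ) * Complex.cosh u = 4 * a * (2 * Complex.cosh u) by ring, hu]
  field_simp
  ring

lemma exists_mem_Icc_ellipseParam_eq {a : ℝ} (ha : 0 ≤ a) {ξ : ℂ} (hξ : ξ.re = 0) :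
    ∃ x ∈ Set.Icc (1 - 16 * a) 1, ellipseParam a ξ = x := by
  refine ⟨1 - 8 * a + 8 * a * Real.cos ξ.im, ⟨?_, ?_⟩, ?_⟩
  · nlinarith [Real.neg_one_le_cos ξ.im]
  · nlinarith [Real.cos_le_one ξ.im]
  · have hξI : ξ = ξ.im * Complex.I := by
      apply Complex.ext <;> simp [hξ]
    rw [ellipseParam, hξI, Complex.cosh_mul_I]
    push_cast
    simp

lemma norm_ellipseParam_le {a : ℝ} (ha : 0 ≤ a) (ha' : a ≤ 1 / 8) {ξ : ℂ}
    (hξ : |ξ.re| ≤ Real.log 4) : ‖ellipseParam a ξ‖ ≤ 1 + 9 * a := by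
  have hcosh : Real.cosh ξ.re ≤ 17 / 8 := by
    rw [← Real.cosh_abs]
    refine ((Real.cosh_le_cosh (y := Real.log 4)).2 ?_).trans_eq ?_
    · rwa [abs_abs, abs_of_pos (Real.log_pos (by norm_num))]
    · rw [Real.cosh_log (by norm_num)]
      norm_num
  calc ‖ellipseParam a ξ‖ ≤ ‖(1 - 8 * a : ℂ)‖ + ‖(8 * a : ℂ)‖ * ‖Complex.cosh ξ‖ := by
        rw [ellipseParam, ← norm_mul]; exact norm_add_le _ _
    _ ≤ (1 - 8 * a) + 8 * a * (17 / 8) := by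
        gcongr
        · have h := Complex.norm_real (1 - 8 * a)
          push_cast at h
          rw [h, Real.norm_of_nonneg (by linarith)]
        · simp [abs_of_nonneg ha]
        · exact (Complex.norm_cosh_le ξ).trans hcosh
    _ = 1 + 9 * a := by ring

/-- Hadamard three-circles estimate: for `c` with `∑|c_i| ≤ 2` and `Q_c(v) = ∑ c_i v^i`,
the sup of `|Q_c|` on the circle `|z−(1−4a)| = 4a` is at most
`√(sup_{x ∈ [1−16a,1]} |Q_c(x)|) · 2 √(exp(9an))`. -/
theorem stmt9 (n : ℕ) (a : ℝ) (ha0 : 0 < a) (ha : a ≤ 1 / 8)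
    (c : Fin (n + 1) → ℝ) (hc : ∑ i, |c i| ≤ 2) (z : ℂ)
    (hz : ‖z - (1 - 4 * a)‖ = 4 * a) :
    ‖∑ i, (c i : ℂ) * z ^ (i : ℕ)‖ ≤
      Real.sqrt (sSup {y : ℝ | ∃ x ∈ Set.Icc (1 - 16 * a) (1 : ℝ),
          y = ‖∑ i, (c i : ℂ) * (x : ℂ) ^ (i : ℕ)‖})
        * (2 * Real.sqrt (Real.exp (9 * a * n))) := by
  set S := {y : ℝ | ∃ x ∈ Set.Icc (1 - 16 * a) (1 : ℝ),
    y = ‖∑ i, (c i : ℂ) * (x : ℂ) ^ (i : ℕ)‖}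
  have hS : ∀ y ∈ S, y ≤ 2 := by
    rintro _ ⟨x, hx, rfl⟩
    simpa using norm_sum_mul_pow_le hc le_rfl (w := x) (by
      rw [Complex.norm_real, Real.norm_eq_abs, abs_le]; constructor <;> linarith [hx.1, hx.2])
  have hpow : (1 + 9 * a) ^ n ≤ Real.exp (9 * a * n) := by
    rw [mul_comm _ (n : ℝ), Real.exp_nat_mul]
    gcongr
    linarith [Real.add_one_le_exp (9 * a)]
  have hSK : sSup S ≤ 2 * Real.exp (9 * a * n) := by
    refine (csSup_le (s := S) ⟨_, 1, ⟨by linarith, le_rfl⟩, rfl⟩ hS).trans ?_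
    nlinarith [one_le_pow₀ (n := n) (by linarith : 1 ≤ 1 + 9 * a)]
  set f : ℂ → ℂ := fun ξ => ∑ i, (c i : ℂ) * ellipseParam a ξ ^ (i : ℕ)
  have hedge : ∀ ξ ∈ Complex.re ⁻¹' {0}, ‖f ξ‖ ≤ sSup S := fun ξ hξ => by
    obtain ⟨x, hx, hξx⟩ := exists_mem_Icc_ellipseParam_eq ha0.le hξ
    exact le_csSup ⟨2, hS⟩ ⟨x, hx, by simp only [f, hξx]⟩
  have hstrip : ∀ ξ ∈ Complex.HadamardThreeLines.verticalClosedStrip 0 (Real.log 4),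
      ‖f ξ‖ ≤ 2 * Real.exp (9 * a * n) := fun ξ hξ =>
    (norm_sum_mul_pow_le hc (by linarith) (norm_ellipseParam_le ha0.le ha
      ((abs_of_nonneg hξ.1).trans_le hξ.2))).trans (by gcongr)
  obtain ⟨u, rfl, hu0, hu⟩ := exists_ellipseParam_eq ha0 hz
  refine (norm_le_sqrt_mul_sqrt_of_re_le_midpoint (f := f) (by unfold f ellipseParam; fun_prop)
    (Real.log_pos (by norm_num)) hedge hstrip hSK hu0 (by simpa using hu)).trans ?_
  rw [Real.sqrt_mul zero_le_two]
  have : √2 ≤ 2 := Real.sqrt_le_iff.2 ⟨zero_le_two, by norm_num⟩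
  gcongr
end

section
/- Let p(z) = ∑_{j=0}^M a_j z^j be a complex polynomial with |a_j| ≤ 1 for all 0 ≤ j ≤ M, and suppose p has a root of multiplicity at least k at z = 1. Then for every real x ∈ [1 − k/(9M), 1], |p(x)| ≤ (M+1)·(e/9)^k. -/
/-!
Expand `p` around `1`: `p(x) = ∑_{j ≥ k} q_j (x - 1)^j` with `q_j = (hasseDeriv j p)(1)`, and the
coefficient bounds give `|q_j| ≤ (M + 1) C(M, j)`. For `j ≥ k` and `t = 1 - x` we have
`t^j ≤ 9^{-k} (9t)^j`, so
`|p(x)| ≤ (M + 1) 9^{-k} (1 + 9t)^M ≤ (M + 1) 9^{-k} e^{9Mt} ≤ (M + 1) (e/9)^k`,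
the last step because `9Mt ≤ k`.
-/

open Finset Polynomial

namespace Polynomial

lemma X_pow_dvd_taylor_of_dvd {R : Type*} [CommRing R] {p : R[X]} {r : R} {k : ℕ}
    (h : (X - C r) ^ k ∣ p) : X ^ k ∣ taylor r p := by
  obtain ⟨g, rfl⟩ := h
  refine ⟨taylor r g, ?_⟩
  rw [taylor_mul, taylor_pow, map_sub, taylor_X, taylor_C, add_sub_cancel_right]

lemma norm_eval_le_sum_range {𝕜 : Type*} [NormedField 𝕜] {q : 𝕜[X]} {n : ℕ}
    (hq : q.natDegree < n) (z : 𝕜) :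
    ‖q.eval z‖ ≤ ∑ j ∈ range n, ‖q.coeff j‖ * ‖z‖ ^ j := by
  rw [eval_eq_sum_range' hq]
  refine (norm_sum_le _ _).trans (sum_le_sum fun j _ => ?_)
  rw [norm_mul, norm_pow]

section UnitCoefficients

variable {𝕜 : Type*} [RCLike 𝕜] {p : 𝕜[X]} {M : ℕ}

lemma norm_hasseDeriv_coeff_le (hdeg : p.natDegree ≤ M) (hcoeff : ∀ j, ‖p.coeff j‖ ≤ 1)
    (j i : ℕ) : ‖(hasseDeriv j p).coeff i‖ ≤ M.choose j := by
  rw [hasseDeriv_coeff, norm_mul, RCLike.norm_natCast]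
  rcases le_or_gt (i + j) M with h | h
  · calc ((i + j).choose j : ℝ) * ‖p.coeff (i + j)‖ ≤ (i + j).choose j * 1 := by
          gcongr; exact hcoeff _
      _ ≤ M.choose j := by rw [mul_one]; exact_mod_cast Nat.choose_le_choose j h
  · rw [coeff_eq_zero_of_natDegree_lt (hdeg.trans_lt h), norm_zero, mul_zero]
    positivity

lemma norm_taylor_coeff_le (hdeg : p.natDegree ≤ M) (hcoeff : ∀ j, ‖p.coeff j‖ ≤ 1)
    {r : 𝕜} (hr : ‖r‖ ≤ 1) (j : ℕ) : ‖(taylor r p).coeff j‖ ≤ (M + 1) * M.choose j := by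
  have hd : (hasseDeriv j p).natDegree < M + 1 :=
    Nat.lt_succ_of_le ((natDegree_hasseDeriv_le p j).trans (tsub_le_self.trans hdeg))
  rw [taylor_coeff]
  calc ‖(hasseDeriv j p).eval r‖
      ≤ ∑ i ∈ range (M + 1), ‖(hasseDeriv j p).coeff i‖ * ‖r‖ ^ i := norm_eval_le_sum_range hd r
    _ ≤ ∑ _i ∈ range (M + 1), (M.choose j : ℝ) := sum_le_sum fun i _ =>
        (mul_le_of_le_one_right (norm_nonneg _) (pow_le_one₀ (norm_nonneg _) hr)).trans
          (norm_hasseDeriv_coeff_le hdeg hcoeff j i)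
    _ = (M + 1) * M.choose j := by simp

lemma norm_taylor_coeff_mul_pow_le (hdeg : p.natDegree ≤ M) (hcoeff : ∀ j, ‖p.coeff j‖ ≤ 1)
    {r : 𝕜} {k : ℕ} (hroot : (X - C r) ^ k ∣ p) (hr : ‖r‖ ≤ 1) {t c : ℝ} (ht : 0 ≤ t)
    (hc : 1 ≤ c) (j : ℕ) :
    ‖(taylor r p).coeff j‖ * t ^ j ≤ (M + 1) / c ^ k * (M.choose j * (c * t) ^ j) := by
  rcases lt_or_ge j k with hj | hj
  · rw [X_pow_dvd_iff.1 (X_pow_dvd_taylor_of_dvd hroot) j hj, norm_zero, zero_mul]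
    have : 0 < c := by linarith
    positivity
  have htj : t ^ j * c ^ k ≤ (c * t) ^ j := by
    rw [mul_pow, mul_comm]; gcongr
  calc ‖(taylor r p).coeff j‖ * t ^ j ≤ (M + 1) * M.choose j * t ^ j := by
        gcongr; exact norm_taylor_coeff_le hdeg hcoeff hr j
    _ = (M + 1) / c ^ k * (M.choose j * (t ^ j * c ^ k)) := by
        field_simp
    _ ≤ (M + 1) / c ^ k * (M.choose j * (c * t) ^ j) := by gcongr

end UnitCoefficients

end Polynomial

lemma sum_range_choose_mul_pow_le_exp (M : ℕ) {s : ℝ} (hs : 0 ≤ s) :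
    ∑ j ∈ range (M + 1), (M.choose j : ℝ) * s ^ j ≤ Real.exp (M * s) := by
  calc ∑ j ∈ range (M + 1), (M.choose j : ℝ) * s ^ j = (s + 1) ^ M := by
        rw [add_pow]; simp only [one_pow, mul_one, mul_comm]
    _ ≤ Real.exp s ^ M := by gcongr; exact Real.add_one_le_exp s
    _ = Real.exp (M * s) := (Real.exp_nat_mul s M).symm

/-- If `p` has degree at most `M`, all coefficients of modulus at most 1, and a root of
multiplicity at least `k` at `1`, then `|p(x)| ≤ (M+1)(e/9)^k` for all real
`x ∈ [1 − k/(9M), 1]`. -/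
theorem stmt10 (M k : ℕ) (hM : 0 < M) (p : Polynomial ℂ) (hdeg : p.natDegree ≤ M)
    (hcoeff : ∀ j, ‖p.coeff j‖ ≤ 1)
    (hroot : (Polynomial.X - Polynomial.C 1) ^ k ∣ p)
    (x : ℝ) (hx1 : 1 - (k : ℝ) / (9 * M) ≤ x) (hx2 : x ≤ 1) :
    ‖p.eval (x : ℂ)‖ ≤ (M + 1) * (Real.exp 1 / 9) ^ k := by
  set t := 1 - x
  have ht : 0 ≤ t := sub_nonneg.2 hx2
  have hMt : M * (9 * t) ≤ k := by
    have := (le_div_iff₀ (by positivity : (0 : ℝ) < 9 * M)).1 (by linarith : t ≤ k / (9 * M))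
    linarith
  have hnorm : ‖(x : ℂ) - 1‖ = t := by
    rw [← Complex.ofReal_one, ← Complex.ofReal_sub, Complex.norm_real, Real.norm_eq_abs,
      abs_sub_comm, abs_of_nonneg ht]
  calc ‖p.eval (x : ℂ)‖ = ‖(taylor 1 p).eval ((x : ℂ) - 1)‖ := by rw [taylor_eval, sub_add_cancel]
    _ ≤ ∑ j ∈ range (M + 1), ‖(taylor 1 p).coeff j‖ * t ^ j := by
        rw [← hnorm]
        exact norm_eval_le_sum_range (by rw [natDegree_taylor]; omega) _
    _ ≤ ∑ j ∈ range (M + 1), (M + 1) / 9 ^ k * (M.choose j * (9 * t) ^ j) :=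
        sum_le_sum fun j _ =>
          norm_taylor_coeff_mul_pow_le hdeg hcoeff hroot (by simp) ht (by norm_num) j
    _ ≤ (M + 1) / 9 ^ k * Real.exp (M * (9 * t)) := by
        rw [← mul_sum]; gcongr; exact sum_range_choose_mul_pow_le_exp M (by positivity)
    _ ≤ (M + 1) / 9 ^ k * Real.exp k := by gcongr
    _ = (M + 1) * (Real.exp 1 / 9) ^ k := by
        rw [← mul_one (k : ℝ), Real.exp_nat_mul, div_pow]; ring
end

section
/- Let p(z) = ∑_{j=0}^M a_j z^j be a complex polynomial with |a_j| ≤ 9 for all j, having a root of multiplicity at least k at z = 1. Let A be the arc {e^{iθ} : |θ| ≤ k/(9M)} of the unit circle (which is symmetric around 1 and has arc length 2k/(9M)). Then sup_{z ∈ A} |p(z)| ≤ 9(M+1)·(e/9)^k. -/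
/-!
Write `p = (X - 1)^k q`. Since `q_j = -∑_{i ≤ j} ((X - 1) q)_i`, the hockey-stick identity turns a
bound `C(j + k, k)` on the coefficients of `(X - 1) q` into the bound `C(j + k + 1, k + 1)` on those
of `q`, so `|q_j| ≤ 9 C(j + k, k) ≤ 9 C(M, k)` for every coefficient of `q`. On the unit circle
this gives `|q(z)| ≤ 9 (M + 1) C(M, k)`, while `|z - 1| ≤ |θ| ≤ k / (9M)` on the arc. Finally `C(M, k) ≤ M^k / k!` and `k^k / k! ≤ e^k`.
-/

open Polynomial Finset

section CoeffBound

variable {R : Type*} [SeminormedRing R]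

theorem sum_range_coeff_X_sub_one_mul (q : R[X]) (j : ℕ) :
    ∑ i ∈ range (j + 1), ((X - C 1) * q).coeff i = -q.coeff j := by
  induction j with
  | zero => simp [sub_mul, mul_coeff_zero]
  | succ j ih =>
    rw [sum_range_succ, ih]
    simp only [sub_mul, one_mul, map_one, coeff_sub, coeff_X_mul]
    abel

theorem norm_coeff_le_of_X_sub_one_mul {q : R[X]} {B : ℝ} {k : ℕ}
    (h : ∀ i, ‖((X - C 1) * q).coeff i‖ ≤ B * (i + k).choose k) (j : ℕ) :
    ‖q.coeff j‖ ≤ B * (j + k + 1).choose (k + 1) := by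
  rw [← norm_neg, ← sum_range_coeff_X_sub_one_mul, ← Nat.sum_range_add_choose, Nat.cast_sum,
    mul_sum]
  exact norm_sum_le_of_le _ fun i _ => h i

theorem norm_coeff_le_of_X_sub_one_pow_mul {B : ℝ} (k : ℕ) {q : R[X]}
    (h : ∀ j, ‖((X - C 1) ^ k * q).coeff j‖ ≤ B) (j : ℕ) :
    ‖q.coeff j‖ ≤ B * (j + k).choose k := by
  induction k generalizing q j with
  | zero => simpa using h j
  | succ k ih =>
    refine norm_coeff_le_of_X_sub_one_mul (fun i => ih (fun j => ?_) i) j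
    rw [← mul_assoc, ← pow_succ]
    exact h j

end CoeffBound

theorem norm_eval_le_of_norm_le_one {R : Type*} [SeminormedRing R] [NormOneClass R]
    {q : R[X]} {z : R} {B : ℝ} (hz : ‖z‖ ≤ 1) (h : ∀ i ≤ q.natDegree, ‖q.coeff i‖ ≤ B) :
    ‖q.eval z‖ ≤ (q.natDegree + 1) * B := by
  have hterm : ∀ i ∈ range (q.natDegree + 1), ‖q.coeff i * z ^ i‖ ≤ B := fun i hi =>
    calc ‖q.coeff i * z ^ i‖ ≤ ‖q.coeff i‖ * ‖z‖ ^ i :=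
          (norm_mul_le _ _).trans (by gcongr; exact norm_pow_le _ _)
      _ ≤ B * 1 := by
          have hB : 0 ≤ B := (norm_nonneg _).trans (h 0 (Nat.zero_le _))
          gcongr
          · exact h i (mem_range_succ_iff.mp hi)
          · exact pow_le_one₀ (norm_nonneg _) hz
      _ = B := mul_one B
  calc ‖q.eval z‖ ≤ ∑ _i ∈ range (q.natDegree + 1), B := by
        rw [eval_eq_sum_range]; exact norm_sum_le_of_le _ hterm
    _ = (q.natDegree + 1) * B := by simp

theorem norm_eval_le_of_X_sub_one_pow_dvd {𝕜 : Type*} [NormedField 𝕜] {p : 𝕜[X]} {M k : ℕ}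
    {B : ℝ} (hdeg : p.natDegree ≤ M) (hcoeff : ∀ j, ‖p.coeff j‖ ≤ B)
    (hroot : (X - C 1) ^ k ∣ p) {z : 𝕜} (hz : ‖z‖ ≤ 1) :
    ‖p.eval z‖ ≤ ‖z - 1‖ ^ k * (((M : ℝ) + 1) * (B * M.choose k)) := by
  have hB : 0 ≤ B := (norm_nonneg _).trans (hcoeff 0)
  rcases eq_or_ne p 0 with rfl | hp
  · simp only [eval_zero, norm_zero]
    positivity
  obtain ⟨q, rfl⟩ := hroot
  have hq : q ≠ 0 := right_ne_zero_of_mul hp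
  have hdeg' : k + q.natDegree ≤ M := by
    rwa [natDegree_mul (pow_ne_zero _ (X_sub_C_ne_zero 1)) hq, natDegree_pow,
      natDegree_X_sub_C, mul_one] at hdeg
  have hqz : ‖q.eval z‖ ≤ (q.natDegree + 1) * (B * M.choose k) := by
    refine norm_eval_le_of_norm_le_one hz fun i hi => ?_
    calc ‖q.coeff i‖ ≤ B * (i + k).choose k := norm_coeff_le_of_X_sub_one_pow_mul k hcoeff i
      _ ≤ B * M.choose k := by gcongr; omega
  rw [eval_mul, norm_mul, eval_pow, norm_pow, eval_sub, eval_X, eval_C]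
  refine mul_le_mul_of_nonneg_left (hqz.trans ?_) (by positivity)
  gcongr
  exact_mod_cast (Nat.le_add_left _ _).trans hdeg'

theorem div_pow_mul_choose_le_exp_div_pow {c : ℝ} (hc : 0 < c) (M k : ℕ) :
    ((k : ℝ) / (c * M)) ^ k * M.choose k ≤ (Real.exp 1 / c) ^ k := by
  have hscale : (k : ℝ) / (c * M) * M ≤ k / c := by
    rw [div_mul_eq_div_div, div_mul_comm]
    exact mul_le_of_le_one_left (by positivity) (div_self_le_one _)
  calc ((k : ℝ) / (c * M)) ^ k * M.choose k
      ≤ ((k : ℝ) / (c * M)) ^ k * (M ^ k / k.factorial) := by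
        gcongr; exact Nat.choose_le_pow_div k M
    _ = ((k : ℝ) / (c * M) * M) ^ k / k.factorial := by rw [mul_pow, mul_div_assoc]
    _ ≤ ((k : ℝ) / c) ^ k / k.factorial := by gcongr
    _ = (k : ℝ) ^ k / k.factorial / c ^ k := by rw [div_pow, div_right_comm]
    _ ≤ Real.exp k / c ^ k := by
        gcongr; exact Real.pow_div_factorial_le_exp (x := k) k.cast_nonneg k
    _ = (Real.exp 1 / c) ^ k := by rw [div_pow, ← Real.exp_nat_mul, mul_one]

theorem stmt11_general (M k : ℕ) (p : Polynomial ℂ) (hdeg : p.natDegree ≤ M)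
    (hcoeff : ∀ j, ‖p.coeff j‖ ≤ 9)
    (hroot : (Polynomial.X - Polynomial.C 1) ^ k ∣ p)
    (θ : ℝ) (hθ : |θ| ≤ (k : ℝ) / (9 * M)) :
    ‖p.eval (Complex.exp (θ * Complex.I))‖ ≤
      9 * (M + 1) * (Real.exp 1 / 9) ^ k := by
  set z := Complex.exp (θ * Complex.I)
  have hz : ‖z‖ = 1 := Complex.norm_exp_ofReal_mul_I θ
  have hz1 : ‖z - 1‖ ≤ (k : ℝ) / (9 * M) := by
    refine le_trans ?_ hθ
    simpa [z, mul_comm, Real.norm_eq_abs] using Real.norm_exp_I_mul_ofReal_sub_one_le (x := θ)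
  calc ‖p.eval z‖ ≤ ‖z - 1‖ ^ k * ((M + 1) * (9 * M.choose k)) :=
        norm_eval_le_of_X_sub_one_pow_dvd hdeg hcoeff hroot hz.le
    _ ≤ ((k : ℝ) / (9 * M)) ^ k * ((M + 1) * (9 * M.choose k)) := by gcongr
    _ = 9 * (M + 1) * (((k : ℝ) / (9 * M)) ^ k * M.choose k) := by ring
    _ ≤ 9 * (M + 1) * (Real.exp 1 / 9) ^ k := by
        gcongr; exact div_pow_mul_choose_le_exp_div_pow (by norm_num) M k

/-- If `p` has degree at most `M`, all coefficients of modulus at most 9, and a root of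
multiplicity at least `k` at `1`, then on the arc `{e^{iθ} : |θ| ≤ k/(9M)}` of the unit
circle one has `|p| ≤ 9(M+1)(e/9)^k`. -/
theorem stmt11 (M k : ℕ) (hM : 0 < M) (p : Polynomial ℂ) (hdeg : p.natDegree ≤ M)
    (hcoeff : ∀ j, ‖p.coeff j‖ ≤ 9)
    (hroot : (Polynomial.X - Polynomial.C 1) ^ k ∣ p)
    (θ : ℝ) (hθ : |θ| ≤ (k : ℝ) / (9 * M)) :
    ‖p.eval (Complex.exp (θ * Complex.I))‖ ≤
      9 * (M + 1) * (Real.exp 1 / 9) ^ k :=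
  stmt11_general M k p hdeg hcoeff hroot θ hθ
end

section
/- Let 0 < ν < 1 and c ∈ ℝ^{n+1}. With F_c defined as F_c(z) = ∑_{i=0}^n c_i ((1−ν)/2+(1+ν)/2·z)^i ((1+ν)/2+(1−ν)/2·z)^{n−i} and Q_c(w) = ∑_{i=0}^n c_i w^i, one has max_{|z|=1} |F_c(z)| = max_{θ ∈ (−π, π]} (1/(1 + (1−ν²)sin²(θ/2)/ν²))^{n/2} · |Q_c(e^{iθ})|. -/
/-!
The substitution `w = (a + b z) / (b + a z)` with `a = (1 - ν) / 2`, `b = (1 + ν) / 2` maps the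
unit circle onto itself, and it turns `F_c(z)` into `(b + a z) ^ n * Q_c(w)`. Since
`(b - a w) (b + a z) = b ^ 2 - a ^ 2 = ν`, the factor `|b + a z|` equals `ν / |b - a w|`, and for
`w = e^{iθ}` one has `|b - a w| ^ 2 = ν ^ 2 + (1 - ν ^ 2) sin² (θ / 2)`. Hence both sides are the
supremum of the same set of values.
-/

open Finset Complex ComplexConjugate

theorem Fin.sum_mul_mul_pow_mul_pow_sub {R : Type*} [CommSemiring R] (n : ℕ)
    (c : Fin (n + 1) → R) (w B : R) :
    ∑ i : Fin (n + 1), c i * (w * B) ^ (i : ℕ) * B ^ (n - i) = B ^ n * ∑ i, c i * w ^ (i : ℕ) := by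
  rw [mul_sum]
  refine sum_congr rfl fun i _ => ?_
  rw [mul_pow, ← pow_mul_pow_sub B (Nat.lt_succ_iff.mp i.is_lt)]
  ring

namespace Complex

theorem norm_ofReal_add_mul_eq_of_norm_eq_one (a b : ℝ) {z : ℂ} (hz : ‖z‖ = 1) :
    ‖(a : ℂ) + b * z‖ = ‖(b : ℂ) + a * z‖ := by
  have hzz : conj z * z = 1 := by rw [conj_mul', hz]; norm_num
  calc ‖(a : ℂ) + b * z‖ = ‖conj z * (a + b * z)‖ := by rw [norm_mul, norm_conj, hz, one_mul]
    _ = ‖conj ((b : ℂ) + a * z)‖ := by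
      congr 1
      simp only [map_add, map_mul, conj_ofReal]
      linear_combination (b : ℂ) * hzz
    _ = ‖(b : ℂ) + a * z‖ := norm_conj _

theorem ofReal_add_mul_ne_zero {a b : ℝ} (hab : |a| < |b|) {z : ℂ} (hz : ‖z‖ = 1) :
    (b : ℂ) + a * z ≠ 0 := by
  intro h
  have : ‖(b : ℂ)‖ = ‖(a : ℂ) * z‖ := by rw [eq_neg_of_add_eq_zero_left h, norm_neg]
  rw [norm_mul, hz, mul_one, norm_real, norm_real, Real.norm_eq_abs, Real.norm_eq_abs] at this
  exact hab.ne' this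

theorem exists_mobius_image {a b : ℝ} (hab : |a| < |b|) {z : ℂ} (hz : ‖z‖ = 1) :
    ∃ w : ℂ, ‖w‖ = 1 ∧ w * (b + a * z) = a + b * z := by
  have hB := ofReal_add_mul_ne_zero hab hz
  refine ⟨(a + b * z) / (b + a * z), ?_, div_mul_cancel₀ _ hB⟩
  rw [norm_div, norm_ofReal_add_mul_eq_of_norm_eq_one a b hz, div_self (norm_ne_zero_iff.mpr hB)]

theorem exists_mobius_preimage {a b : ℝ} (hab : |a| < |b|) {w : ℂ} (hw : ‖w‖ = 1) :
    ∃ z : ℂ, ‖z‖ = 1 ∧ w * (b + a * z) = a + b * z := by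
  obtain ⟨z, hz, hwz⟩ := exists_mobius_image (a := -a) (b := b) (by rwa [abs_neg]) hw
  refine ⟨z, hz, ?_⟩
  push_cast at hwz
  linear_combination -hwz

theorem mobius_denominators_mul {a b : ℝ} {z w : ℂ} (h : w * (b + a * z) = a + b * z) :
    ((b : ℂ) - a * w) * (b + a * z) = (b : ℂ) ^ 2 - (a : ℂ) ^ 2 := by
  linear_combination (-(a : ℂ)) * h

theorem norm_ofReal_sub_mul_exp_sq (a b θ : ℝ) :
    ‖(b : ℂ) - a * exp (θ * I)‖ ^ 2 = (b - a) ^ 2 + 4 * a * b * Real.sin (θ / 2) ^ 2 := by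
  have hcos : Real.cos θ = 1 - 2 * Real.sin (θ / 2) ^ 2 := by
    rw [← Real.cos_two_mul_eq_one_sub, mul_div_cancel₀ θ two_ne_zero]
  rw [exp_mul_I, ← ofReal_cos, ← ofReal_sin, Complex.sq_norm,
    show (b : ℂ) - a * (Real.cos θ + Real.sin θ * I)
      = ((b - a * Real.cos θ : ℝ) : ℂ) + ((-(a * Real.sin θ) : ℝ) : ℂ) * I by push_cast; ring,
    normSq_add_mul_I]
  linear_combination a ^ 2 * Real.sin_sq_add_cos_sq θ - 2 * a * b * hcos

end Complex

theorem norm_homogenized_eq_of_mobius {n : ℕ} {ν : ℝ} (hν : 0 < ν) (c : Fin (n + 1) → ℂ)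
    {z : ℂ} {θ : ℝ}
    (h : exp (θ * I) * (((1 + ν) / 2 : ℝ) + ((1 - ν) / 2 : ℝ) * z)
      = ((1 - ν) / 2 : ℝ) + ((1 + ν) / 2 : ℝ) * z) :
    ‖∑ i : Fin (n + 1), c i * ((((1 - ν) / 2 : ℝ) : ℂ) + ((1 + ν) / 2 : ℝ) * z) ^ (i : ℕ)
        * ((((1 + ν) / 2 : ℝ) : ℂ) + ((1 - ν) / 2 : ℝ) * z) ^ (n - i)‖
      = (1 / (1 + (1 - ν ^ 2) * Real.sin (θ / 2) ^ 2 / ν ^ 2)) ^ ((n : ℝ) / 2)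
          * ‖∑ i, c i * exp (θ * I) ^ (i : ℕ)‖ := by
  set a : ℝ := (1 - ν) / 2
  set b : ℝ := (1 + ν) / 2
  set w := exp (θ * I)
  set B : ℂ := b + a * z
  rw [← h, Fin.sum_mul_mul_pow_mul_pow_sub, norm_mul, norm_pow]
  congr 1
  have hprod : ((b : ℂ) - a * w) * B = ν := by
    rw [mobius_denominators_mul h]
    simp only [a, b]; push_cast; ring
  have hsq : ‖(b : ℂ) - a * w‖ ^ 2 = ν ^ 2 + (1 - ν ^ 2) * Real.sin (θ / 2) ^ 2 := by
    rw [norm_ofReal_sub_mul_exp_sq]; ring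
  have hne : ‖(b : ℂ) - a * w‖ ^ 2 ≠ 0 := by
    have := congrArg norm hprod
    rw [norm_mul, norm_real, Real.norm_of_nonneg hν.le] at this
    exact pow_ne_zero 2 (left_ne_zero_of_mul (this ▸ hν.ne'))
  have hB : ‖B‖ ^ 2 = 1 / (1 + (1 - ν ^ 2) * Real.sin (θ / 2) ^ 2 / ν ^ 2) := by
    have hnorm := congrArg (‖·‖ ^ 2) hprod
    simp only [norm_mul, mul_pow, norm_real, Real.norm_eq_abs, sq_abs] at hnorm
    rw [show 1 + (1 - ν ^ 2) * Real.sin (θ / 2) ^ 2 / ν ^ 2 = ‖(b : ℂ) - a * w‖ ^ 2 / ν ^ 2 by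
      rw [hsq]; field_simp, one_div_div, eq_div_iff hne, ← hnorm, mul_comm]
  rw [← hB, ← Real.rpow_natCast, ← Real.rpow_natCast, ← Real.rpow_mul (norm_nonneg B)]
  congr 1
  push_cast
  ring

theorem stmt17_general (n : ℕ) (ν : ℝ) (hν0 : 0 < ν) (c : Fin (n + 1) → ℝ) :
    sSup {y : ℝ | ∃ z : ℂ, norm z = 1 ∧
        y = norm (∑ i, (c i : ℂ)
            * (((1 - ν) / 2 : ℂ) + ((1 + ν) / 2 : ℂ) * z) ^ (i : ℕ)
            * (((1 + ν) / 2 : ℂ) + ((1 - ν) / 2 : ℂ) * z) ^ (n - (i : ℕ)))}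
      = sSup {y : ℝ | ∃ θ ∈ Set.Ioc (-Real.pi) Real.pi,
          y = (1 / (1 + (1 - ν ^ 2) * Real.sin (θ / 2) ^ 2 / ν ^ 2)) ^ ((n : ℝ) / 2)
              * norm (∑ i, (c i : ℂ)
                  * Complex.exp (θ * Complex.I) ^ (i : ℕ))} := by
  have hab : |(1 - ν) / 2| < |(1 + ν) / 2| := by
    rw [abs_of_pos (by linarith : (0 : ℝ) < (1 + ν) / 2), abs_lt]; constructor <;> linarith
  rw [show ((1 - ν) / 2 : ℂ) = (((1 - ν) / 2 : ℝ) : ℂ) by push_cast; rfl,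
    show ((1 + ν) / 2 : ℂ) = (((1 + ν) / 2 : ℝ) : ℂ) by push_cast; rfl]
  congr 1
  ext y
  constructor
  · rintro ⟨z, hz, rfl⟩
    obtain ⟨w, hw, hwz⟩ := exists_mobius_image hab hz
    have hexp : exp (arg w * I) = w := by
      simpa [hw] using norm_mul_exp_arg_mul_I w
    rw [← hexp] at hwz
    exact ⟨arg w, arg_mem_Ioc w, norm_homogenized_eq_of_mobius hν0 _ hwz⟩
  · rintro ⟨θ, -, rfl⟩
    obtain ⟨z, hz, hwz⟩ := exists_mobius_preimage hab (norm_exp_ofReal_mul_I θ)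
    exact ⟨z, hz, (norm_homogenized_eq_of_mobius hν0 _ hwz).symm⟩

/-- `max_{|z|=1} |F_c(z)| = max_{θ ∈ (−π,π]} (1/(1 + (1−ν²)sin²(θ/2)/ν²))^{n/2} |Q_c(e^{iθ})|`. -/
theorem stmt17 (n : ℕ) (ν : ℝ) (hν0 : 0 < ν) (hν1 : ν < 1) (c : Fin (n + 1) → ℝ) :
    sSup {y : ℝ | ∃ z : ℂ, norm z = 1 ∧
        y = norm (∑ i, (c i : ℂ)
            * (((1 - ν) / 2 : ℂ) + ((1 + ν) / 2 : ℂ) * z) ^ (i : ℕ)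
            * (((1 + ν) / 2 : ℂ) + ((1 - ν) / 2 : ℂ) * z) ^ (n - (i : ℕ)))}
      = sSup {y : ℝ | ∃ θ ∈ Set.Ioc (-Real.pi) Real.pi,
          y = (1 / (1 + (1 - ν ^ 2) * Real.sin (θ / 2) ^ 2 / ν ^ 2)) ^ ((n : ℝ) / 2)
              * norm (∑ i, (c i : ℂ)
                  * Complex.exp (θ * Complex.I) ^ (i : ℕ))} :=
  stmt17_general n ν hν0 c
end

section
/- Let 0 < ν, ε < 1 and n ∈ ℕ satisfy 2ln(2/ε)/n ≤ ν ≤ 1 − 2ln(2/ε)/n. Then for every real vector c = (c_0, …, c_n) with ∑_{i=0}^n c_i = 0, ∑_{i=0}^n |c_i| ≤ 2, and |c_0| > 2ε, the function F_c(z) = ∑_{i=0}^n c_i ((1−ν)/2 + (1+ν)/2·z)^i ((1+ν)/2 + (1−ν)/2·z)^{n−i} satisfies max_{|z|=1} |F_c(z)| ≥ ε · exp(−C · ln^{2/3}(1/ε) · (n(1−ν²))^{1/3} / ν^{2/3}) for some absolute constant C > 0. -/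
/-!
For `w = e^{iψ}` put `D = (1 + ν) - (1 - ν) w`. The Möbius map `w ↦ ((1 + ν) w - (1 - ν)) / D`
preserves the unit circle and turns `F_c` into `(2ν / D)^n Q_c(w)`, where `Q_c(w) = ∑ c_i w^i`; since
`|D|² = 4ν² + 2(1 - ν²)(1 - cos ψ)`, on the arc `|ψ| ≤ π/m` the factor `(2ν / |D|)^n` is at least
`exp(-π² n (1 - ν²) / (8 ν² m²))`.

On that arc `Q_c` is not small: `∏_{j<m} Q_c(ω^j x)` with `ω = e^{2πi/m}` equals `c_0^m` at `0`, so by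
the maximum modulus principle it reaches `|c_0|^m` at some point of the circle, and one of the
rotations `ω^j x` of that point lies on the arc. Bounding the other `m - 1` factors by `∑ |c_i| ≤ 2`
gives `|Q_c| ≥ 2ε^m` there. Taking `m ≈ (n(1 - ν²) / (ν² ln(1/ε)))^{1/3}` makes both losses
`O(ln^{2/3}(1/ε) (n(1 - ν²))^{1/3} / ν^{2/3})`.
-/

open Complex Real Finset

theorem exists_norm_eq_one_norm_apply_zero_le {f : ℂ → ℂ} (hf : Differentiable ℂ f) :
    ∃ u : ℂ, ‖u‖ = 1 ∧ ‖f 0‖ ≤ ‖f u‖ := by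
  obtain ⟨u, hu, hmax⟩ := Complex.exists_mem_frontier_isMaxOn_norm (f := f)
    (Metric.isBounded_ball (x := (0 : ℂ)) (r := 1)) ⟨0, by simp⟩ hf.diffContOnCl
  rw [frontier_ball _ one_ne_zero, mem_sphere_zero_iff_norm] at hu
  exact ⟨u, hu, hmax (subset_closure (by simp))⟩

theorem exists_pow_mul_exp_eq_exp_abs_le {m : ℕ} (hm : 0 < m) (φ : ℝ) :
    ∃ j < m, ∃ ψ : ℝ, |ψ| ≤ π / m ∧ exp (2 * π * I / m) ^ j * exp (φ * I) = exp (ψ * I) := by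
  have hround := abs_sub_round (φ * m / (2 * π))
  generalize round (φ * m / (2 * π)) = r at hround
  have hmZ : (0 : ℤ) < m := by exact_mod_cast hm
  have hmR : (0 : ℝ) < m := by exact_mod_cast hm
  -- `j ≡ -r (mod m)`, so multiplying by `exp (2πi/m) ^ j` moves `φ` to `φ - 2πr/m` modulo `2π`
  have hj : (((-r) % m).toNat : ℤ) = -r - m * ((-r) / m) := by
    rw [Int.toNat_of_nonneg (Int.emod_nonneg _ hmZ.ne')]
    linarith [Int.emod_add_mul_ediv (-r) m]
  refine ⟨((-r) % m).toNat, by have := Int.emod_lt_of_pos (-r) hmZ; omega,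
    φ - 2 * π * r / m, ?_, ?_⟩
  · have : φ - 2 * π * r / m = (φ * m / (2 * π) - r) * (2 * π / m) := by field_simp
    rw [this, abs_mul, abs_of_pos (by positivity : 0 < 2 * π / m)]
    calc _ ≤ 1 / 2 * (2 * π / m) := by gcongr
      _ = π / m := by ring
  · rw [← Complex.exp_nat_mul, ← Complex.exp_add, Complex.exp_eq_exp_iff_exists_int]
    refine ⟨-((-r) / m), ?_⟩
    have hj' : ((((-r) % m).toNat : ℕ) : ℂ) = ((-r - m * ((-r) / m) : ℤ) : ℂ) := by
      exact_mod_cast hj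
    have : (m : ℂ) ≠ 0 := by exact_mod_cast hm.ne'
    rw [hj']
    push_cast
    field_simp
    ring

theorem exists_abs_le_norm_apply_zero_pow_le {f : ℂ → ℂ} (hf : Differentiable ℂ f) {M : ℝ}
    (hM : ∀ u : ℂ, ‖u‖ = 1 → ‖f u‖ ≤ M) {m : ℕ} (hm : 0 < m) :
    ∃ ψ : ℝ, |ψ| ≤ π / m ∧ ‖f 0‖ ^ m ≤ M ^ (m - 1) * ‖f (exp (ψ * I))‖ := by
  set ω := exp (2 * π * I / m)
  have hω : ‖ω‖ = 1 := by
    rw [Complex.norm_exp]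
    simp [Complex.div_re]
  obtain ⟨u, hu, hu_max⟩ := exists_norm_eq_one_norm_apply_zero_le
    (f := fun x => ∏ j ∈ range m, f (ω ^ j * x)) (by fun_prop)
  obtain ⟨j, hj, ψ, hψ, hrot⟩ := exists_pow_mul_exp_eq_exp_abs_le hm (arg u)
  rw [show exp (arg u * I) = u by simpa [hu] using norm_mul_exp_arg_mul_I u] at hrot
  have hunit : ∀ i : ℕ, ‖ω ^ i * u‖ = 1 := fun i => by rw [norm_mul, norm_pow, hω, hu]; simp
  refine ⟨ψ, hψ, ?_⟩
  calc ‖f 0‖ ^ m = ‖∏ j ∈ range m, f (ω ^ j * 0)‖ := by simp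
    _ ≤ ‖∏ j ∈ range m, f (ω ^ j * u)‖ := hu_max
    _ = ‖f (exp (ψ * I))‖ * ∏ i ∈ (range m).erase j, ‖f (ω ^ i * u)‖ := by
      rw [norm_prod, ← mul_prod_erase _ _ (mem_range.2 hj), hrot]
    _ ≤ ‖f (exp (ψ * I))‖ * M ^ (m - 1) := by
      gcongr
      refine (prod_le_prod (fun i _ => norm_nonneg _) fun i _ => hM _ (hunit i)).trans_eq ?_
      rw [prod_const, card_erase_of_mem (mem_range.2 hj), card_range]
    _ = M ^ (m - 1) * ‖f (exp (ψ * I))‖ := mul_comm _ _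

noncomputable def bitFlipTransform {n : ℕ} (ν : ℝ) (c : Fin (n + 1) → ℂ) (z : ℂ) : ℂ :=
  ∑ i, c i * (((1 - ν) / 2 : ℂ) + ((1 + ν) / 2 : ℂ) * z) ^ (i : ℕ)
    * (((1 + ν) / 2 : ℂ) + ((1 - ν) / 2 : ℂ) * z) ^ (n - (i : ℕ))

def genFun {n : ℕ} (c : Fin (n + 1) → ℂ) (w : ℂ) : ℂ := ∑ i, c i * w ^ (i : ℕ)

section

variable {n : ℕ} (c : Fin (n + 1) → ℂ)

theorem genFun_zero : genFun c 0 = c 0 := by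
  simp [genFun, Fin.sum_univ_succ]

theorem norm_genFun_le {w : ℂ} (hw : ‖w‖ = 1) : ‖genFun c w‖ ≤ ∑ i, ‖c i‖ :=
  (norm_sum_le _ _).trans_eq (by simp [hw])

theorem differentiable_genFun : Differentiable ℂ (genFun c) := by
  unfold genFun; fun_prop

theorem bitFlipTransform_eq_pow_mul_genFun (ν : ℝ) {a w z : ℂ}
    (h₁ : ((1 - ν) / 2 : ℂ) + ((1 + ν) / 2 : ℂ) * z = a * w)
    (h₂ : ((1 + ν) / 2 : ℂ) + ((1 - ν) / 2 : ℂ) * z = a) :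
    bitFlipTransform ν c z = a ^ n * genFun c w := by
  rw [bitFlipTransform, genFun, h₁, h₂, mul_sum]
  refine sum_congr rfl fun i _ => ?_
  rw [← pow_mul_pow_sub a (Fin.is_le i)]
  ring

theorem bitFlipTransform_moebius (ν : ℝ) {w : ℂ} (hD : (1 + ν : ℂ) - (1 - ν) * w ≠ 0) :
    bitFlipTransform ν c (((1 + ν) * w - (1 - ν)) / ((1 + ν) - (1 - ν) * w))
      = (2 * ν / ((1 + ν) - (1 - ν) * w)) ^ n * genFun c w :=
  bitFlipTransform_eq_pow_mul_genFun c ν (by field_simp; ring) (by field_simp; ring)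

end

theorem norm_sub_mul_exp_sq (p q ψ : ℝ) :
    ‖(q : ℂ) - p * exp (ψ * I)‖ ^ 2 = (q - p) ^ 2 + 2 * p * q * (1 - Real.cos ψ) := by
  rw [Complex.sq_norm, Complex.normSq_apply]
  simp [Complex.exp_ofReal_mul_I_re, Complex.exp_ofReal_mul_I_im]
  linear_combination p ^ 2 * Real.sin_sq_add_cos_sq ψ

theorem exp_neg_le_div_pow {ν b s : ℝ} (hν : 0 < ν) (hb : 0 < b) (h : b ^ 2 ≤ ν ^ 2 * (1 + s))
    (n : ℕ) : Real.exp (-(n * s / 2)) ≤ (ν / b) ^ n := by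
  have hb_le : b / ν ≤ Real.exp (s / 2) := by
    refine le_of_pow_le_pow_left₀ two_ne_zero (Real.exp_nonneg _) ?_
    calc (b / ν) ^ 2 ≤ 1 + s := by rw [div_pow, div_le_iff₀ (by positivity)]; linarith
      _ ≤ Real.exp s := by linarith [Real.add_one_le_exp s]
      _ = Real.exp (s / 2) ^ 2 := by rw [← Real.exp_nat_mul]; ring_nf
  calc Real.exp (-(n * s / 2)) = (Real.exp (s / 2))⁻¹ ^ n := by
        rw [← Real.exp_neg, ← Real.exp_nat_mul]; ring_nf
    _ ≤ (b / ν)⁻¹ ^ n := by gcongr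
    _ = (ν / b) ^ n := by rw [inv_div]

theorem exists_exp_mul_norm_genFun_le_norm_bitFlipTransform {ν : ℝ} (hν0 : 0 < ν) (hν1 : ν ≤ 1)
    {n : ℕ} (c : Fin (n + 1) → ℂ) (ψ : ℝ) :
    ∃ z : ℂ, ‖z‖ = 1 ∧ Real.exp (-(n * (1 - ν ^ 2) * ψ ^ 2 / (8 * ν ^ 2)))
      * ‖genFun c (exp (ψ * I))‖ ≤ ‖bitFlipTransform ν c z‖ := by
  set D : ℂ := (1 + ν : ℂ) - (1 - ν) * exp (ψ * I)
  have hD_sq : ‖D‖ ^ 2 = (2 * ν) ^ 2 + 2 * (1 - ν ^ 2) * (1 - Real.cos ψ) := by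
    have := norm_sub_mul_exp_sq (1 - ν) (1 + ν) ψ
    push_cast at this
    rw [this]; ring
  have hcos_le : 2 * (1 - Real.cos ψ) ≤ ψ ^ 2 := by
    linarith [Real.one_sub_sq_div_two_le_cos (x := ψ)]
  have hcos_nonneg : 0 ≤ 1 - Real.cos ψ := by linarith [Real.cos_le_one ψ]
  have hν_sq : 0 ≤ 1 - ν ^ 2 := by nlinarith
  have hνD : 2 * ν ≤ ‖D‖ :=
    le_of_pow_le_pow_left₀ two_ne_zero (norm_nonneg _) (by rw [hD_sq]; nlinarith)
  have hD : D ≠ 0 := norm_pos_iff.1 (by linarith)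
  have hD_le : ‖D‖ ^ 2 ≤ (2 * ν) ^ 2 * (1 + (1 - ν ^ 2) * ψ ^ 2 / (4 * ν ^ 2)) := by
    rw [hD_sq, show (2 * ν) ^ 2 * (1 + (1 - ν ^ 2) * ψ ^ 2 / (4 * ν ^ 2))
      = (2 * ν) ^ 2 + (1 - ν ^ 2) * ψ ^ 2 by field_simp; ring]
    nlinarith
  refine ⟨((1 + ν) * exp (ψ * I) - (1 - ν)) / D, ?_, ?_⟩
  · rw [norm_div, div_eq_one_iff_eq (norm_ne_zero_iff.2 hD), ← sq_eq_sq₀ (norm_nonneg _)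
      (norm_nonneg _), norm_sub_rev]
    have h₁ := norm_sub_mul_exp_sq (1 + ν) (1 - ν) ψ
    have h₂ := norm_sub_mul_exp_sq (1 - ν) (1 + ν) ψ
    push_cast at h₁ h₂
    rw [h₁, h₂]; ring
  have h2ν : ‖(2 * ν : ℂ)‖ = 2 * ν := by simp [abs_of_pos hν0]
  rw [bitFlipTransform_moebius c ν hD, norm_mul, norm_pow, norm_div, h2ν]
  gcongr
  rw [show n * (1 - ν ^ 2) * ψ ^ 2 / (8 * ν ^ 2) = n * ((1 - ν ^ 2) * ψ ^ 2 / (4 * ν ^ 2)) / 2 by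
    ring]
  exact exp_neg_le_div_pow (by positivity) (by linarith) hD_le n

theorem exists_exp_mul_pow_le_norm_bitFlipTransform {ν : ℝ} (hν0 : 0 < ν) (hν1 : ν ≤ 1)
    {n : ℕ} (c : Fin (n + 1) → ℂ) (hc : ∑ i, ‖c i‖ ≤ 2) {ε : ℝ} (hε : 0 ≤ ε)
    (hc0 : 2 * ε ≤ ‖c 0‖) {m : ℕ} (hm : 0 < m) :
    ∃ z : ℂ, ‖z‖ = 1 ∧
      Real.exp (-(π ^ 2 * n * (1 - ν ^ 2) / (8 * ν ^ 2 * m ^ 2))) * ε ^ m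
        ≤ ‖bitFlipTransform ν c z‖ := by
  obtain ⟨ψ, hψ, harc⟩ := exists_abs_le_norm_apply_zero_pow_le (differentiable_genFun c)
    (fun u hu => (norm_genFun_le c hu).trans hc) hm
  obtain ⟨z, hz, hF⟩ := exists_exp_mul_norm_genFun_le_norm_bitFlipTransform hν0 hν1 c ψ
  refine ⟨z, hz, le_trans ?_ hF⟩
  have hQ : 2 * ε ^ m ≤ ‖genFun c (exp (ψ * I))‖ := by
    refine le_of_mul_le_mul_left ?_ (pow_pos two_pos (m - 1))
    calc 2 ^ (m - 1) * (2 * ε ^ m) = (2 * ε) ^ m := by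
          rw [mul_pow, ← mul_assoc, ← pow_succ, Nat.sub_add_cancel hm]
      _ ≤ ‖c 0‖ ^ m := by gcongr
      _ ≤ _ := by rwa [genFun_zero] at harc
  have hψ_sq : ψ ^ 2 ≤ (π / m) ^ 2 := sq_le_sq' (abs_le.1 hψ).1 (abs_le.1 hψ).2
  have hν_sq : 0 ≤ 1 - ν ^ 2 := by nlinarith
  have hexp : Real.exp (-(π ^ 2 * n * (1 - ν ^ 2) / (8 * ν ^ 2 * m ^ 2)))
      ≤ Real.exp (-(n * (1 - ν ^ 2) * ψ ^ 2 / (8 * ν ^ 2))) := by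
    rw [Real.exp_le_exp, neg_le_neg_iff, show π ^ 2 * n * (1 - ν ^ 2) / (8 * ν ^ 2 * m ^ 2)
      = n * (1 - ν ^ 2) * (π / m) ^ 2 / (8 * ν ^ 2) by ring]
    gcongr
  exact mul_le_mul hexp (by linarith [pow_nonneg hε m]) (pow_nonneg hε m) (Real.exp_nonneg _)

theorem exp_neg_mul_exp_neg_le_exp_mul_pow {ℓ L : ℝ} (hℓ : 0 < ℓ) (hL : 0 ≤ L) :
    Real.exp (-ℓ) * Real.exp (-(3 * L)) ≤ Real.exp (-(π ^ 2 * L ^ 3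
      / (8 * ℓ ^ 2 * ((⌊L / ℓ⌋₊ + 1 : ℕ) : ℝ) ^ 2))) * Real.exp (-ℓ) ^ (⌊L / ℓ⌋₊ + 1) := by
  set m : ℝ := ((⌊L / ℓ⌋₊ + 1 : ℕ) : ℝ)
  have hLm : L ≤ ℓ * m := by
    rw [← div_le_iff₀' hℓ]; push_cast [m]; exact (Nat.lt_floor_add_one _).le
  have hmL : ℓ * m ≤ L + ℓ := by
    have := Nat.floor_le (div_nonneg hL hℓ.le)
    rw [le_div_iff₀ hℓ] at this; push_cast [m]; linarith
  have hcube : L ^ 3 / (ℓ ^ 2 * m ^ 2) ≤ L := by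
    refine div_le_of_le_mul₀ (by positivity) hL ?_
    nlinarith [pow_le_pow_left₀ hL hLm 2]
  have hpi : π ^ 2 ≤ 16 := by nlinarith [Real.pi_le_four, Real.pi_pos]
  rw [← Real.exp_nat_mul, ← Real.exp_add, ← Real.exp_add, Real.exp_le_exp]
  -- the kernel loss `π² L³ / (8 ℓ² m²)` is at most `2L`, the arc loss `ℓ m` at most `L + ℓ`
  calc -ℓ + -(3 * L) ≤ -(π ^ 2 / 8 * (L ^ 3 / (ℓ ^ 2 * m ^ 2)) + ℓ * m) := by
        have : π ^ 2 / 8 * (L ^ 3 / (ℓ ^ 2 * m ^ 2)) ≤ 2 * L := by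
          nlinarith [div_nonneg (pow_nonneg hL 3) (by positivity : (0 : ℝ) ≤ ℓ ^ 2 * m ^ 2)]
        linarith
    _ = _ := by rw [mul_assoc 8, ← mul_div_mul_comm]; ring

/-- Lower bound for bit-flip noise: there is an absolute constant `C > 0` such that whenever
`2ln(2/ε)/n ≤ ν ≤ 1 − 2ln(2/ε)/n` and `c` satisfies `∑ c_i = 0`, `∑|c_i| ≤ 2`,
`|c_0| > 2ε`, the function `F_c` attains modulus at least
`ε · exp(−C ln^{2/3}(1/ε) (n(1−ν²))^{1/3} / ν^{2/3})` somewhere on the unit circle. -/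
theorem stmt19 :
    ∃ C : ℝ, 0 < C ∧
      ∀ (ν ε : ℝ) (n : ℕ) (c : Fin (n + 1) → ℝ),
        0 < ν → ν < 1 → 0 < ε → ε < 1 →
        2 * Real.log (2 / ε) / n ≤ ν → ν ≤ 1 - 2 * Real.log (2 / ε) / n →
        (∑ i, c i) = 0 → (∑ i, |c i|) ≤ 2 → 2 * ε < |c 0| →
        ∃ z : ℂ, ‖z‖ = 1 ∧
          ε * Real.exp (-C * Real.log (1 / ε) ^ ((2 : ℝ) / 3)
              * (n * (1 - ν ^ 2)) ^ ((1 : ℝ) / 3) / ν ^ ((2 : ℝ) / 3)) ≤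
            ‖∑ i, (c i : ℂ)
              * (((1 - ν) / 2 : ℂ) + ((1 + ν) / 2 : ℂ) * z) ^ (i : ℕ)
              * (((1 + ν) / 2 : ℂ) + ((1 - ν) / 2 : ℂ) * z) ^ (n - (i : ℕ))‖ := by
  refine ⟨3, by norm_num, fun ν ε n c hν0 hν1 hε0 hε1 _ _ _ hc hc0 => ?_⟩
  set ℓ := Real.log (1 / ε) with hℓ_def
  have hℓ : 0 < ℓ := Real.log_pos (one_lt_one_div hε0 hε1)
  have hε : Real.exp (-ℓ) = ε := by rw [hℓ_def, one_div, Real.log_inv, neg_neg, Real.exp_log hε0]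
  have hB : 0 ≤ n * (1 - ν ^ 2) := mul_nonneg n.cast_nonneg (by nlinarith)
  set L := ℓ ^ ((2 : ℝ) / 3) * (n * (1 - ν ^ 2)) ^ ((1 : ℝ) / 3) / ν ^ ((2 : ℝ) / 3)
  have hL : 0 ≤ L := by positivity
  have hL_cube : L ^ 3 = ℓ ^ 2 * (n * (1 - ν ^ 2)) / ν ^ 2 := by
    have hcube : ∀ {y : ℝ} (a : ℝ), 0 ≤ y → (y ^ (a / 3)) ^ 3 = y ^ a := fun a hy => by
      rw [← Real.rpow_natCast, ← Real.rpow_mul hy]; ring_nf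
    simp only [L, div_pow, mul_pow]
    rw [hcube _ hℓ.le, hcube _ hν0.le, hcube _ hB, Real.rpow_two, Real.rpow_two, Real.rpow_one]
  obtain ⟨z, hz, hF⟩ := exists_exp_mul_pow_le_norm_bitFlipTransform hν0 hν1.le
    (fun i => (c i : ℂ)) (by simpa using hc) hε0.le (by simpa using hc0.le) (Nat.succ_pos ⌊L / ℓ⌋₊)
  refine ⟨z, hz, ?_⟩
  calc ε * _ = Real.exp (-ℓ) * Real.exp (-(3 * L)) := by rw [hε]; simp only [L]; ring_nf
    _ ≤ _ := exp_neg_mul_exp_neg_le_exp_mul_pow hℓ hL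
    _ = _ := by rw [hL_cube, hε]; field_simp
    _ ≤ _ := hF
end
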